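/- arXiv:2204.07706 — 3 statements merged into one kernel-verified Lean document; each statement's English description precedes it below -/
import Mathlib

section
/- With the setup of generalized Sierpiński carpets: let 𝐢 ∈ 𝒟ⁿ and 𝐣₁,…,𝐣_{2n} ∈ 𝒟 with j₁⋯j_n ≠ 𝐢 (as words of length n). Then the Euclidean distance between the points φ_{j₁⋯j_{2n}}((0,0)) and φ_{𝐢𝐢}((0,0)) is strictly greater than √2·N^{−2n}. Consequently the squares φ_{j₁⋯j_{2n}}([0,1]²) and φ_{𝐢𝐢}([0,1]²), each of side length N^{−2n}, are disjoint. -/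
open Set

/-- The map φ_d(x) = (x + d)/N on the Euclidean plane. -/
noncomputable def phiE (N : ℕ) (d : ℕ × ℕ) (x : EuclideanSpace ℝ (Fin 2)) :
    EuclideanSpace ℝ (Fin 2) :=
  (N : ℝ)⁻¹ • (x + (WithLp.equiv 2 (Fin 2 → ℝ)).symm ![(d.1 : ℝ), (d.2 : ℝ)])

/-- φ_{i₁⋯iₙ} = φ_{i₁} ∘ ⋯ ∘ φ_{iₙ}. -/
noncomputable def phiWordE (N : ℕ) (w : List (ℕ × ℕ)) :
    EuclideanSpace ℝ (Fin 2) → EuclideanSpace ℝ (Fin 2) :=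
  w.foldr (fun d f => phiE N d ∘ f) id

/-- The unit square [0,1]² in the Euclidean plane. -/
def unitSquareE : Set (EuclideanSpace ℝ (Fin 2)) :=
  {x | ∀ j, x j ∈ Icc (0 : ℝ) 1}

/-- the coordinate digits of a pair -/
def dig (d : ℕ × ℕ) : Fin 2 → ℕ := ![d.1, d.2]

/-- base-N value of a digit list (head = most significant). -/
def valN (N : ℕ) (l : List ℕ) : ℕ := l.foldl (fun v d => N * v + d) 0

lemma valN_foldl (N a : ℕ) (l : List ℕ) :
    l.foldl (fun v d => N * v + d) a = a * N ^ l.length + valN N l := by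
  induction l generalizing a with
  | nil => simp [valN]
  | cons d l ih =>
    simp only [List.foldl_cons, List.length_cons]
    rw [ih, show valN N (d :: l) = (N * 0 + d) * N ^ l.length + valN N l from ih (N*0+d)]
    ring

lemma valN_cons (N d : ℕ) (l : List ℕ) :
    valN N (d :: l) = d * N ^ l.length + valN N l := by
  have := valN_foldl N (N * 0 + d) l
  simpa [valN] using this

lemma valN_append (N : ℕ) (l₁ l₂ : List ℕ) :
    valN N (l₁ ++ l₂) = valN N l₁ * N ^ l₂.length + valN N l₂ := by
  rw [valN, List.foldl_append, valN_foldl]; rfl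

lemma valN_lt (N : ℕ) (hN : 0 < N) (l : List ℕ) (h : ∀ d ∈ l, d < N) :
    valN N l < N ^ l.length := by
  induction l with
  | nil => simpa [valN]
  | cons d l ih =>
    rw [valN_cons]
    have hd : d < N := h d (List.mem_cons_self)
    have hv := ih (fun x hx => h x (List.mem_cons_of_mem d hx))
    have : d * N ^ l.length + valN N l < (d + 1) * N ^ l.length := by
      rw [add_mul, one_mul]; omega
    calc d * N ^ l.length + valN N l < (d+1) * N ^ l.length := this
      _ ≤ N * N ^ l.length := Nat.mul_le_mul_right _ hd
      _ = N ^ (d :: l).length := by rw [List.length_cons, pow_succ]; ring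

lemma valN_inj (N : ℕ) (hN : 0 < N) : ∀ (l₁ l₂ : List ℕ), l₁.length = l₂.length →
    (∀ d ∈ l₁, d < N) → (∀ d ∈ l₂, d < N) → valN N l₁ = valN N l₂ → l₁ = l₂ := by
  intro l₁
  induction l₁ with
  | nil => intro l₂ h _ _ _; exact (List.length_eq_zero_iff.mp h.symm).symm
  | cons d l ih =>
    intro l₂ hlen h₁ h₂ hv
    cases l₂ with
    | nil => simp at hlen
    | cons e m =>
      simp only [List.length_cons, Nat.succ_inj] at hlen
      rw [valN_cons, valN_cons, hlen] at hv
      have hvl : valN N l < N ^ m.length := hlen ▸ valN_lt N hN l (fun x hx => h₁ x (List.mem_cons_of_mem _ hx))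
      have hvm : valN N m < N ^ m.length := valN_lt N hN m (fun x hx => h₂ x (List.mem_cons_of_mem _ hx))
      have hde : d = e := by
        rcases lt_trichotomy d e with h | h | h
        · exfalso
          have : d * N ^ m.length + valN N l < e * N ^ m.length + valN N m := by
            calc d * N ^ m.length + valN N l < (d+1) * N ^ m.length := by rw [add_mul, one_mul]; omega
              _ ≤ e * N ^ m.length := Nat.mul_le_mul_right _ h
              _ ≤ _ := Nat.le_add_right _ _
          omega
        · exact h
        · exfalso
          have : e * N ^ m.length + valN N m < d * N ^ m.length + valN N l := by
            calc e * N ^ m.length + valN N m < (e+1) * N ^ m.length := by rw [add_mul, one_mul]; omega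
              _ ≤ d * N ^ m.length := Nat.mul_le_mul_right _ h
              _ ≤ _ := Nat.le_add_right _ _
          omega
      subst hde
      have hval : valN N l = valN N m := by omega
      rw [ih m hlen (fun x hx => h₁ x (List.mem_cons_of_mem _ hx))
        (fun x hx => h₂ x (List.mem_cons_of_mem _ hx)) hval]

lemma pair_list_ext : ∀ (l₁ l₂ : List (ℕ × ℕ)),
    l₁.map (fun d => dig d 0) = l₂.map (fun d => dig d 0) →
    l₁.map (fun d => dig d 1) = l₂.map (fun d => dig d 1) → l₁ = l₂ := by
  intro l₁
  induction l₁ with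
  | nil => intro l₂ h₀ _; cases l₂ <;> simp_all
  | cons d l ih =>
    intro l₂ h₀ h₁
    cases l₂ with
    | nil => simp at h₀
    | cons e m =>
      simp only [List.map_cons, List.cons.injEq] at h₀ h₁
      have : d = e := by
        have h0 : d.1 = e.1 := by simpa [dig] using h₀.1
        have h1 : d.2 = e.2 := by simpa [dig] using h₁.1
        exact Prod.ext h0 h1
      rw [this, ih m h₀.2 h₁.2]

lemma phiE_apply (N : ℕ) (d : ℕ × ℕ) (x : EuclideanSpace ℝ (Fin 2)) (t : Fin 2) :
    phiE N d x t = (x t + (dig d t : ℝ)) / N := by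
  have : phiE N d x t = (N : ℝ)⁻¹ * (x t + ![(d.1 : ℝ), (d.2 : ℝ)] t) := by
    simp [phiE, PiLp.smul_apply, PiLp.add_apply, mul_add]
  rw [this]
  have : ![(d.1 : ℝ), (d.2 : ℝ)] t = (dig d t : ℝ) := by
    fin_cases t <;> simp [dig]
  rw [this, div_eq_inv_mul]

lemma phiWordE_cons (N : ℕ) (d : ℕ × ℕ) (w : List (ℕ × ℕ)) (x : EuclideanSpace ℝ (Fin 2)) :
    phiWordE N (d :: w) x = phiE N d (phiWordE N w x) := rfl

lemma phiWordE_zero_apply (N : ℕ) (hN : 0 < N) (w : List (ℕ × ℕ)) (t : Fin 2) :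
    phiWordE N w 0 t = (valN N (w.map (fun d => dig d t)) : ℝ) / (N : ℝ) ^ w.length := by
  have hN0 : (N : ℝ) ≠ 0 := Nat.cast_ne_zero.mpr hN.ne'
  induction w with
  | nil => simp [phiWordE, valN]
  | cons d w ih =>
    rw [phiWordE_cons, phiE_apply, ih]
    rw [List.map_cons, valN_cons, List.length_cons, List.length_map]
    push_cast
    field_simp
    ring

lemma phiWordE_apply (N : ℕ) (hN : 0 < N) (w : List (ℕ × ℕ)) (x : EuclideanSpace ℝ (Fin 2)) (t : Fin 2) :
    phiWordE N w x t = x t / (N : ℝ) ^ w.length + phiWordE N w 0 t := by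
  have hN0 : (N : ℝ) ≠ 0 := Nat.cast_ne_zero.mpr hN.ne'
  induction w with
  | nil => simp [phiWordE]
  | cons d w ih =>
    rw [phiWordE_cons, phiWordE_cons, phiE_apply, phiE_apply, ih, List.length_cons]
    field_simp
    ring

lemma gap (K a b c : ℕ) (ha : a < K) (hb : b < K) (hc : c < K) (hac : a ≠ c) :
    a * K + b + 2 ≤ c * K + c ∨ c * K + c + 2 ≤ a * K + b := by
  rcases Nat.lt_or_ge a c with h | h
  · left
    have h1 : a * K + K ≤ c * K := by
      calc a * K + K = (a + 1) * K := by ring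
        _ ≤ c * K := Nat.mul_le_mul_right _ h
    have hc1 : 1 ≤ c := Nat.pos_of_ne_zero (by omega)
    set A := a * K; set C := c * K
    omega
  · right
    have h' : c < a := Nat.lt_of_le_of_ne h (Ne.symm hac)
    have h1 : c * K + K ≤ a * K := by
      calc c * K + K = (c + 1) * K := by ring
        _ ≤ a * K := Nat.mul_le_mul_right _ h'
    set A := a * K; set C := c * K
    omega

lemma dig_lt (N : ℕ) (d : ℕ × ℕ) (hd1 : d.1 < N) (hd2 : d.2 < N) (t : Fin 2) :
    dig d t < N := by
  fin_cases t <;> simpa [dig]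

lemma key (N : ℕ) (hN : 2 ≤ N) (D : Finset (ℕ × ℕ))
    (hD : ∀ d ∈ D, d.1 < N ∧ d.2 < N)
    (n : ℕ) (hn : 1 ≤ n)
    (I : List (ℕ × ℕ)) (hIlen : I.length = n) (hImem : ∀ d ∈ I, d ∈ D)
    (J : List (ℕ × ℕ)) (hJlen : J.length = 2 * n) (hJmem : ∀ d ∈ J, d ∈ D)
    (hne : J.take n ≠ I) :
    ∃ t : Fin 2, 2 / (N : ℝ) ^ (2 * n) ≤ |phiWordE N J 0 t - phiWordE N (I ++ I) 0 t| := by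
  have hN0 : 0 < N := by omega
  have hNR : (0 : ℝ) < (N : ℝ) ^ (2 * n) := by positivity
  -- choose a coordinate where the digit strings differ
  have hex : ∃ t : Fin 2, (J.take n).map (fun d => dig d t) ≠ I.map (fun d => dig d t) := by
    by_contra hcon
    push_neg at hcon
    exact hne (pair_list_ext _ _ (hcon 0) (hcon 1))
  obtain ⟨t, ht⟩ := hex
  refine ⟨t, ?_⟩
  have htake : (J.take n).length = n := by
    rw [List.length_take, hJlen]; omega
  have hdrop : (J.drop n).length = n := by
    rw [List.length_drop, hJlen]; omega
  set a := valN N ((J.take n).map (fun d => dig d t)) with ha_def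
  set b := valN N ((J.drop n).map (fun d => dig d t)) with hb_def
  set c := valN N (I.map (fun d => dig d t)) with hc_def
  have hdigJ : ∀ x ∈ J.map (fun d => dig d t), x < N := by
    intro x hx
    obtain ⟨d, hd, rfl⟩ := List.mem_map.mp hx
    exact dig_lt N d (hD d (hJmem d hd)).1 (hD d (hJmem d hd)).2 t
  have hdigI : ∀ x ∈ I.map (fun d => dig d t), x < N := by
    intro x hx
    obtain ⟨d, hd, rfl⟩ := List.mem_map.mp hx
    exact dig_lt N d (hD d (hImem d hd)).1 (hD d (hImem d hd)).2 t
  have hdigTake : ∀ x ∈ (J.take n).map (fun d => dig d t), x < N := by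
    intro x hx
    obtain ⟨d, hd, rfl⟩ := List.mem_map.mp hx
    have : d ∈ J := List.mem_of_mem_take hd
    exact dig_lt N d (hD d (hJmem d this)).1 (hD d (hJmem d this)).2 t
  have hdigDrop : ∀ x ∈ (J.drop n).map (fun d => dig d t), x < N := by
    intro x hx
    obtain ⟨d, hd, rfl⟩ := List.mem_map.mp hx
    have : d ∈ J := List.mem_of_mem_drop hd
    exact dig_lt N d (hD d (hJmem d this)).1 (hD d (hJmem d this)).2 t
  have haK : a < N ^ n := by
    have := valN_lt N hN0 _ hdigTake
    rwa [List.length_map, htake] at this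
  have hbK : b < N ^ n := by
    have := valN_lt N hN0 _ hdigDrop
    rwa [List.length_map, hdrop] at this
  have hcK : c < N ^ n := by
    have := valN_lt N hN0 _ hdigI
    rwa [List.length_map, hIlen] at this
  have hac : a ≠ c := by
    intro h
    exact ht (valN_inj N hN0 _ _ (by rw [List.length_map, List.length_map, htake, hIlen])
      hdigTake hdigI h)
  -- values of the two points at coordinate t
  have hJval : valN N (J.map (fun d => dig d t)) = a * N ^ n + b := by
    conv_lhs => rw [← List.take_append_drop n J]
    rw [List.map_append, valN_append, List.length_map, hdrop]
  have hIIval : valN N ((I ++ I).map (fun d => dig d t)) = c * N ^ n + c := by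
    rw [List.map_append, valN_append, List.length_map, hIlen]
  have hxt : phiWordE N J 0 t = ((a * N ^ n + b : ℕ) : ℝ) / (N : ℝ) ^ (2 * n) := by
    rw [phiWordE_zero_apply N hN0, hJval, hJlen]
  have hyt : phiWordE N (I ++ I) 0 t = ((c * N ^ n + c : ℕ) : ℝ) / (N : ℝ) ^ (2 * n) := by
    rw [phiWordE_zero_apply N hN0, hIIval, List.length_append, hIlen, two_mul]
  rw [hxt, hyt, div_sub_div_same, abs_div, abs_of_pos hNR,
    div_le_div_iff_of_pos_right hNR]
  rcases gap (N ^ n) a b c haK hbK hcK hac with h | h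
  · have : ((a * N ^ n + b : ℕ) : ℝ) + 2 ≤ ((c * N ^ n + c : ℕ) : ℝ) := by
      push_cast; push_cast at h ⊢; exact_mod_cast h
    rw [abs_sub_comm, abs_of_nonneg (by linarith)]
    linarith
  · have : ((c * N ^ n + c : ℕ) : ℝ) + 2 ≤ ((a * N ^ n + b : ℕ) : ℝ) := by
      exact_mod_cast h
    rw [abs_of_nonneg (by linarith)]
    linarith

/-- If 𝐢 ∈ 𝒟ⁿ and J ∈ 𝒟^{2n} with the first n letters of J differing from 𝐢, then the
Euclidean distance between φ_J((0,0)) and φ_{𝐢𝐢}((0,0)) is greater than √2·N^{−2n};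
consequently the squares φ_J([0,1]²) and φ_{𝐢𝐢}([0,1]²) are disjoint. -/
theorem stmt3 (N : ℕ) (hN : 2 ≤ N) (D : Finset (ℕ × ℕ))
    (hD : ∀ d ∈ D, d.1 < N ∧ d.2 < N)
    (n : ℕ) (hn : 1 ≤ n)
    (I : List (ℕ × ℕ)) (hIlen : I.length = n) (hImem : ∀ d ∈ I, d ∈ D)
    (J : List (ℕ × ℕ)) (hJlen : J.length = 2 * n) (hJmem : ∀ d ∈ J, d ∈ D)
    (hne : J.take n ≠ I) :
    dist (phiWordE N J 0) (phiWordE N (I ++ I) 0) >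
      Real.sqrt 2 * (N : ℝ) ^ (-(2 * n : ℤ)) ∧
    Disjoint (phiWordE N J '' unitSquareE) (phiWordE N (I ++ I) '' unitSquareE) := by
  have hN0 : 0 < N := by omega
  have hNR : (0 : ℝ) < (N : ℝ) ^ (2 * n) := by positivity
  obtain ⟨t, ht⟩ := key N hN D hD n hn I hIlen hImem J hJlen hJmem hne
  set x := phiWordE N J 0
  set y := phiWordE N (I ++ I) 0
  have hzpow : (N : ℝ) ^ (-(2 * n : ℤ)) = ((N : ℝ) ^ (2 * n))⁻¹ := by
    rw [zpow_neg]
    norm_cast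
  have hcoord : |x t - y t| ≤ dist x y := by
    rw [EuclideanSpace.dist_eq]
    have h1 : dist (x t) (y t) ^ 2 ≤ ∑ i, dist (x i) (y i) ^ 2 :=
      Finset.single_le_sum (f := fun i => dist (x i) (y i) ^ 2)
        (fun i _ => sq_nonneg _) (Finset.mem_univ t)
    calc |x t - y t| = Real.sqrt (dist (x t) (y t) ^ 2) := by
          rw [Real.sqrt_sq_eq_abs, Real.dist_eq, abs_abs]
      _ ≤ _ := Real.sqrt_le_sqrt h1
  have hsqrt2 : Real.sqrt 2 < 2 := by
    nlinarith [Real.sq_sqrt (by norm_num : (2:ℝ) ≥ 0), Real.sqrt_nonneg 2]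
  constructor
  · have : Real.sqrt 2 * (N : ℝ) ^ (-(2 * n : ℤ)) < 2 / (N : ℝ) ^ (2 * n) := by
      rw [hzpow, div_eq_mul_inv]
      exact mul_lt_mul_of_pos_right hsqrt2 (by positivity)
    calc Real.sqrt 2 * (N : ℝ) ^ (-(2 * n : ℤ)) < 2 / (N : ℝ) ^ (2 * n) := this
      _ ≤ |x t - y t| := ht
      _ ≤ dist x y := hcoord
  · rw [Set.disjoint_left]
    rintro p ⟨q, hq, rfl⟩ ⟨r, hr, hpr⟩
    have hxy : x t - y t = (r t - q t) / (N : ℝ) ^ (2 * n) := by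
      have h1 := phiWordE_apply N hN0 J q t
      rw [hJlen] at h1
      have h2 := phiWordE_apply N hN0 (I ++ I) r t
      rw [List.length_append, hIlen, ← two_mul] at h2
      have heq := congrArg (fun z => z t) hpr
      rw [h1, h2] at heq
      have hxx : (x t : ℝ) = phiWordE N J 0 t := rfl
      have hyy : (y t : ℝ) = phiWordE N (I ++ I) 0 t := rfl
      rw [hxx, hyy]
      field_simp
      field_simp at heq
      linarith
    have hq0 : q t ∈ Icc (0:ℝ) 1 := hq t
    have hr0 : r t ∈ Icc (0:ℝ) 1 := hr t
    have habs : |x t - y t| ≤ 1 / (N : ℝ) ^ (2 * n) := by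
      rw [hxy, abs_div, abs_of_pos hNR, div_le_div_iff_of_pos_right hNR]
      rw [abs_le]
      obtain ⟨hq1, hq2⟩ := hq0
      obtain ⟨hr1, hr2⟩ := hr0
      constructor <;> linarith
    have h21 : (2:ℝ) / (N : ℝ) ^ (2 * n) ≤ 1 / (N : ℝ) ^ (2 * n) := le_trans ht habs
    rw [div_le_div_iff_of_pos_right hNR] at h21
    linarith
end

section
/- Consider the GSC F = F(2m, 𝒟_m) for m ≥ 3 where 𝒟_m = {(0,i) : m ≤ i ≤ 2m−1} ∪ {(2m−1,i) : 0 ≤ i ≤ m−1} ∪ ⋃_{k=0}^{m−1} Λ_{2k}, with Λ_k = {(k,i) : 0 ≤ i ≤ m−1} ∪ {(k+1,i) : m ≤ i ≤ 2m−1}. Then every point of the set C = {(i/(2m), 1/2) : 2 ≤ i ≤ 2m−2} is a cut point of F. -/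
open Set

/-- The map φ_d(x) = (x + d)/N on ℝ². -/
noncomputable def phi (N : ℕ) (d : ℕ × ℕ) (x : ℝ × ℝ) : ℝ × ℝ :=
  ((x.1 + d.1) / N, (x.2 + d.2) / N)

/-- Λ_k = {(k,i) : 0 ≤ i ≤ m−1} ∪ {(k+1,i) : m ≤ i ≤ 2m−1}. -/
def Lambda (m k : ℕ) : Set (ℕ × ℕ) :=
  {d | (d.1 = k ∧ d.2 ≤ m - 1) ∨ (d.1 = k + 1 ∧ m ≤ d.2 ∧ d.2 ≤ 2 * m - 1)}

/-- The digit set 𝒟_m. -/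
def Dm (m : ℕ) : Set (ℕ × ℕ) :=
  {d | d.1 = 0 ∧ m ≤ d.2 ∧ d.2 ≤ 2 * m - 1} ∪
  {d | d.1 = 2 * m - 1 ∧ d.2 ≤ m - 1} ∪
  ⋃ k ∈ {k : ℕ | k ≤ m - 1}, Lambda m (2 * k)

lemma mem_Dm_iff {m : ℕ} {d : ℕ × ℕ} :
    d ∈ Dm m ↔ (d.1 = 0 ∧ m ≤ d.2 ∧ d.2 ≤ 2 * m - 1) ∨ (d.1 = 2 * m - 1 ∧ d.2 ≤ m - 1) ∨
      ∃ k, k ≤ m - 1 ∧ ((d.1 = 2 * k ∧ d.2 ≤ m - 1) ∨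
        (d.1 = 2 * k + 1 ∧ m ≤ d.2 ∧ d.2 ≤ 2 * m - 1)) := by
  simp [Dm, Lambda, mem_iUnion, or_assoc]

lemma phi_dist {N : ℕ} (hN : 0 < N) (d : ℕ × ℕ) (x y : ℝ × ℝ) :
    dist (phi N d x) (phi N d y) = dist x y / N := by
  have hN' : (0:ℝ) < N := by exact_mod_cast hN
  simp only [phi, Prod.dist_eq, Real.dist_eq]
  rw [← max_div_div_right hN'.le]
  congr 1 <;>
    rw [div_sub_div_same, abs_div, abs_of_pos hN'] <;> ring_nf

section Main
variable {m : ℕ} {F : Set (ℝ × ℝ)}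

lemma decomp (hFattr : F = ⋃ d ∈ Dm m, phi (2 * m) d '' F) {x : ℝ × ℝ} (hx : x ∈ F) :
    ∃ d ∈ Dm m, ∃ y ∈ F, phi (2 * m) d y = x := by
  rw [hFattr] at hx
  simpa using hx

lemma phi_mem (hFattr : F = ⋃ d ∈ Dm m, phi (2 * m) d '' F) {d : ℕ × ℕ} (hd : d ∈ Dm m)
    {y : ℝ × ℝ} (hy : y ∈ F) : phi (2 * m) d y ∈ F := by
  rw [hFattr]
  exact mem_iUnion₂.2 ⟨d, hd, mem_image_of_mem _ hy⟩

lemma fixed_mem (hm : 3 ≤ m) (hFne : F.Nonempty) (hFc : IsCompact F)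
    (hFattr : F = ⋃ d ∈ Dm m, phi (2 * m) d '' F) {d : ℕ × ℕ} (hd : d ∈ Dm m)
    {q : ℝ × ℝ} (hq : phi (2 * m) d q = q) : q ∈ F := by
  have hN : 0 < 2 * m := by omega
  have hN' : (1:ℝ) < 2 * m := by
    have : (6:ℝ) ≤ 2 * m := by exact_mod_cast Nat.mul_le_mul_left 2 hm
    linarith
  rw [IsClosed.mem_iff_infDist_zero hFc.isClosed hFne]
  obtain ⟨y, hy, hdy⟩ := hFc.exists_infDist_eq_dist hFne q
  have h1 : Metric.infDist q F ≤ dist q (phi (2 * m) d y) :=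
    Metric.infDist_le_dist_of_mem (phi_mem hFattr hd hy)
  rw [← hq, phi_dist hN] at h1
  rw [hq] at h1
  have h0 : 0 ≤ Metric.infDist q F := Metric.infDist_nonneg
  rw [← hdy] at h1
  push_cast at h1
  by_contra hne
  have hI : 0 < Metric.infDist q F := h0.lt_of_ne (Ne.symm hne)
  have := div_lt_self hI hN'
  linarith

end Main

section Main2
variable {m : ℕ} {F : Set (ℝ × ℝ)}

lemma Dm_bound (hm : 3 ≤ m) {d : ℕ × ℕ} (hd : d ∈ Dm m) : d.1 ≤ 2 * m - 1 ∧ d.2 ≤ 2 * m - 1 := by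
  rw [mem_Dm_iff] at hd
  rcases hd with ⟨h1, h2, h3⟩ | ⟨h1, h2⟩ | ⟨k, hk, ⟨h1, h2⟩ | ⟨h1, h2, h3⟩⟩ <;> omega

lemma bounds (hm : 3 ≤ m) (hFne : F.Nonempty) (hFc : IsCompact F)
    (hFattr : F = ⋃ d ∈ Dm m, phi (2 * m) d '' F) :
    ∀ x ∈ F, 0 ≤ x.1 ∧ x.1 ≤ 1 ∧ 0 ≤ x.2 ∧ x.2 ≤ 1 := by
  have hN' : (6:ℝ) ≤ 2 * m := by exact_mod_cast Nat.mul_le_mul_left 2 hm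
  have key : ∀ f : ℝ × ℝ → ℝ, Continuous f →
      (∀ d ∈ Dm m, ∀ y : ℝ × ℝ, ∃ c : ℕ, c ≤ 2 * m - 1 ∧ f (phi (2 * m) d y) = (f y + c) / (2 * m)) →
      ∀ x ∈ F, 0 ≤ f x ∧ f x ≤ 1 := by
    intro f hf hrec x hx
    constructor
    · obtain ⟨z, hz, hmin⟩ := hFc.exists_isMinOn hFne hf.continuousOn
      obtain ⟨d, hd, y, hy, hdy⟩ := decomp hFattr hz
      obtain ⟨c, hc, heq⟩ := hrec d hd y
      have h1 : f z ≤ f y := hmin hy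
      have h2 : (0:ℝ) ≤ c := Nat.cast_nonneg c
      have h3 : f z = (f y + c) / (2 * m) := by rw [← heq, hdy]
      have h4 : f z ≤ f x := hmin hx
      have h5 : f z * (2 * m) = f y + c := by
        rw [h3]; field_simp
      nlinarith
    · obtain ⟨z, hz, hmax⟩ := hFc.exists_isMaxOn hFne hf.continuousOn
      obtain ⟨d, hd, y, hy, hdy⟩ := decomp hFattr hz
      obtain ⟨c, hc, heq⟩ := hrec d hd y
      have h1 : f y ≤ f z := hmax hy
      have h2 : (c:ℝ) ≤ 2 * m - 1 := by
        have : (c:ℝ) ≤ ((2 * m - 1 : ℕ) : ℝ) := Nat.cast_le.2 hc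
        have h5 : ((2 * m - 1 : ℕ) : ℝ) = 2 * m - 1 := by
          rw [Nat.cast_sub (by omega)]; push_cast; ring
        linarith [this, h5.le]
      have h3 : f z = (f y + c) / (2 * m) := by rw [← heq, hdy]
      have h4 : f x ≤ f z := hmax hx
      have h5 : f z * (2 * m) = f y + c := by
        rw [h3]; field_simp
      nlinarith
  intro x hx
  have b1 := key Prod.fst continuous_fst (fun d hd y => ⟨d.1, (Dm_bound hm hd).1, by simp only [phi]; push_cast; ring⟩) x hx
  have b2 := key Prod.snd continuous_snd (fun d hd y => ⟨d.2, (Dm_bound hm hd).2, by simp only [phi]; push_cast; ring⟩) x hx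
  exact ⟨b1.1, b1.2, b2.1, b2.2⟩

end Main2

section Main3
variable {m : ℕ} {F : Set (ℝ × ℝ)}

lemma Dm_col (hm : 3 ≤ m) {d : ℕ × ℕ} (hd : d ∈ Dm m) {j : ℕ} (h1 : 1 ≤ j)
    (h2 : j ≤ 2 * m - 2) (h3 : d.1 = j) :
    (j % 2 = 0 → d.2 ≤ m - 1) ∧ (j % 2 = 1 → m ≤ d.2) := by
  rw [mem_Dm_iff] at hd
  rcases hd with ⟨e1, e2, e3⟩ | ⟨e1, e2⟩ | ⟨k, hk, ⟨e1, e2⟩ | ⟨e1, e2, e3⟩⟩ <;> omega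

lemma strip (hm : 3 ≤ m) (hFne : F.Nonempty) (hFc : IsCompact F)
    (hFattr : F = ⋃ d ∈ Dm m, phi (2 * m) d '' F) {x : ℝ × ℝ} (hx : x ∈ F) {j : ℕ}
    (h1 : 1 ≤ j) (h2 : j ≤ 2 * m - 2) (h3 : (j : ℝ) / (2 * m) < x.1)
    (h4 : x.1 < ((j : ℝ) + 1) / (2 * m)) :
    (j % 2 = 0 → x.2 ≤ 1 / 2) ∧ (j % 2 = 1 → 1 / 2 ≤ x.2) := by
  have hN' : (6:ℝ) ≤ 2 * m := by exact_mod_cast Nat.mul_le_mul_left 2 hm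
  obtain ⟨d, hd, y, hy, hdy⟩ := decomp hFattr hx
  obtain ⟨hy1, hy2, hy3, hy4⟩ := bounds hm hFne hFc hFattr y hy
  have hx1 : x.1 = (y.1 + d.1) / (2 * m) := by rw [← hdy]; simp only [phi]; push_cast; ring
  have hx2 : x.2 = (y.2 + d.2) / (2 * m) := by rw [← hdy]; simp only [phi]; push_cast; ring
  -- d.1 = j
  have hj1 : (j : ℝ) < y.1 + d.1 := by
    rw [hx1] at h3
    rwa [div_lt_div_iff_of_pos_right (c := 2 * (m:ℝ)) (by linarith)] at h3
  have hj2 : y.1 + d.1 < (j : ℝ) + 1 := by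
    rw [hx1] at h4
    rwa [div_lt_div_iff_of_pos_right (c := 2 * (m:ℝ)) (by linarith)] at h4
  have hdj : d.1 = j := by
    have a1 : (j : ℝ) < (d.1 : ℝ) + 1 := by linarith
    have a2 : (d.1 : ℝ) < (j : ℝ) + 1 := by linarith
    have b1 : j < d.1 + 1 := by exact_mod_cast a1
    have b2 : d.1 < j + 1 := by exact_mod_cast a2
    omega
  obtain ⟨hc0, hc1⟩ := Dm_col hm hd h1 h2 hdj
  constructor
  · intro hpar
    have hd2 : (d.2 : ℝ) ≤ (m : ℝ) - 1 := by
      have := hc0 hpar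
      have : (d.2 : ℝ) ≤ ((m - 1 : ℕ) : ℝ) := Nat.cast_le.2 this
      rw [Nat.cast_sub (by omega)] at this
      simpa using this
    rw [hx2, div_le_iff₀ (by linarith : (0:ℝ) < 2 * m)]
    linarith
  · intro hpar
    have hd2 : (m : ℝ) ≤ (d.2 : ℝ) := Nat.cast_le.2 (hc1 hpar)
    rw [hx2, le_div_iff₀ (by linarith : (0:ℝ) < 2 * m)]
    linarith

end Main3

lemma cut_helper (F : Set (ℝ × ℝ)) (a ε : ℝ) (hε : 0 < ε) (p : ℝ × ℝ) (hp1 : p.1 = a)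
    (g : ℝ → ℝ) (hg : Continuous g) (hg2 : ∀ y : ℝ, g y = 1 / 2 → y = p.2)
    (hL : ∀ x ∈ F, a - ε < x.1 → x.1 < a → 1 / 2 ≤ g x.2)
    (hR : ∀ x ∈ F, a < x.1 → x.1 < a + ε → g x.2 ≤ 1 / 2)
    (q r : ℝ × ℝ) (hq : q ∈ F) (hq1 : q.1 < a) (hqp : q ≠ p)
    (hr : r ∈ F) (hr1 : a < r.1) (hrp : r ≠ p) :
    ¬ IsPreconnected (F \ {p}) := by
  intro h
  set U : Set (ℝ × ℝ) := {x | x.1 < a} ∪ {x | 1 / 2 < g x.2 ∧ x.1 < a + ε} with hU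
  set V : Set (ℝ × ℝ) := {x | a < x.1} ∪ {x | g x.2 < 1 / 2 ∧ a - ε < x.1} with hV
  have hUo : IsOpen U :=
    (isOpen_lt continuous_fst continuous_const).union
      ((isOpen_lt continuous_const (hg.comp continuous_snd)).inter
        (isOpen_lt continuous_fst continuous_const))
  have hVo : IsOpen V :=
    (isOpen_lt continuous_const continuous_fst).union
      ((isOpen_lt (hg.comp continuous_snd) continuous_const).inter
        (isOpen_lt continuous_const continuous_fst))
  have hcover : F \ {p} ⊆ U ∪ V := by
    rintro x ⟨hxF, hxp⟩
    rcases lt_trichotomy x.1 a with h1 | h1 | h1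
    · exact Or.inl (Or.inl h1)
    · have hx2 : g x.2 ≠ 1 / 2 := by
        intro hc
        exact hxp (by
          have := hg2 _ hc
          exact Prod.ext (by rw [h1, hp1]) this)
      rcases lt_or_gt_of_ne hx2 with h2 | h2
      · exact Or.inr (Or.inr ⟨h2, by linarith⟩)
      · exact Or.inl (Or.inr ⟨h2, by linarith⟩)
    · exact Or.inr (Or.inl h1)
  have hqU : q ∈ (F \ {p}) ∩ U := ⟨⟨hq, hqp⟩, Or.inl hq1⟩
  have hrV : r ∈ (F \ {p}) ∩ V := ⟨⟨hr, hrp⟩, Or.inl hr1⟩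
  obtain ⟨x, ⟨hxF, _⟩, hxU, hxV⟩ := h U V hUo hVo hcover ⟨q, hqU⟩ ⟨r, hrV⟩
  simp only [hU, hV, mem_union, mem_setOf_eq] at hxU hxV
  rcases hxU with h1 | ⟨h1, h1'⟩ <;> rcases hxV with h2 | ⟨h2, h2'⟩
  · exact absurd h1 (not_lt.2 h2.le)
  · exact absurd h2 (not_lt.2 (hL x hxF h2' h1))
  · exact absurd h1 (not_lt.2 (hR x hxF h2 h1'))
  · linarith

/-- For m ≥ 3, every point (i/(2m), 1/2) with 2 ≤ i ≤ 2m−2 is a cut point of the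
GSC F(2m, 𝒟_m). -/
theorem stmt9 (m : ℕ) (hm : 3 ≤ m)
    (F : Set (ℝ × ℝ)) (hFne : F.Nonempty) (hFc : IsCompact F)
    (hFattr : F = ⋃ d ∈ Dm m, phi (2 * m) d '' F) :
    ∀ i : ℕ, 2 ≤ i → i ≤ 2 * m - 2 →
      ((i : ℝ) / (2 * m), (1 : ℝ) / 2) ∈ F ∧
      ¬ IsPreconnected (F \ {((i : ℝ) / (2 * m), (1 : ℝ) / 2)}) := by
  intro i h2i hi2
  have hN6 : (6:ℝ) ≤ 2 * m := by exact_mod_cast Nat.mul_le_mul_left 2 hm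
  have hNpos : (0:ℝ) < 2 * m := by linarith
  have hcm1 : ((m - 1 : ℕ) : ℝ) = (m:ℝ) - 1 := by rw [Nat.cast_sub (by omega)]; push_cast; ring
  have hc2m1 : ((2 * m - 1 : ℕ) : ℝ) = 2 * (m:ℝ) - 1 := by
    rw [Nat.cast_sub (by omega)]; push_cast; ring
  have hci1 : ((i - 1 : ℕ) : ℝ) = (i:ℝ) - 1 := by rw [Nat.cast_sub (by omega)]; push_cast; ring
  -- corner points
  have z00 : ((0:ℝ), (0:ℝ)) ∈ F := by
    refine fixed_mem hm hFne hFc hFattr (d := (0, 0)) ?_ ?_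
    · exact mem_Dm_iff.2 (Or.inr (Or.inr ⟨0, by omega, Or.inl ⟨rfl, by omega⟩⟩))
    · simp [phi]
  have z01 : ((0:ℝ), (1:ℝ)) ∈ F := by
    refine fixed_mem hm hFne hFc hFattr (d := (0, 2 * m - 1)) ?_ ?_
    · exact mem_Dm_iff.2 (Or.inl ⟨rfl, by omega, by omega⟩)
    · simp only [phi, hc2m1]
      rw [Prod.ext_iff]
      constructor
      · push_cast; simp
      · push_cast; rw [div_eq_one_iff_eq hNpos.ne']; ring
  have z11 : ((1:ℝ), (1:ℝ)) ∈ F := by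
    refine fixed_mem hm hFne hFc hFattr (d := (2 * m - 1, 2 * m - 1)) ?_ ?_
    · exact mem_Dm_iff.2 (Or.inr (Or.inr ⟨m - 1, by omega, Or.inr ⟨by omega, by omega, by omega⟩⟩))
    · simp only [phi, hc2m1]
      rw [Prod.ext_iff]
      constructor <;> (push_cast; rw [div_eq_one_iff_eq hNpos.ne']; ring)
  set p : ℝ × ℝ := ((i : ℝ) / (2 * m), (1 : ℝ) / 2) with hp
  have ha1 : (0:ℝ) < (i:ℝ) / (2 * m) := by
    apply div_pos _ hNpos
    exact_mod_cast Nat.lt_of_lt_of_le (by omega) h2i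
  have ha2 : (i:ℝ) / (2 * m) < 1 := by
    rw [div_lt_one hNpos]
    have : (i:ℝ) ≤ ((2 * m - 2 : ℕ) : ℝ) := Nat.cast_le.2 hi2
    rw [Nat.cast_sub (by omega)] at this
    push_cast at this
    linarith
  -- membership
  have hpF : p ∈ F := by
    rcases Nat.even_or_odd i with he | ho
    · have : p = phi (2 * m) (i, m - 1) ((0:ℝ), (1:ℝ)) := by
        simp only [phi, hp, hcm1]
        rw [Prod.ext_iff]
        constructor
        · show _ = ((0:ℝ) + (i:ℝ)) / ((2*m : ℕ):ℝ); push_cast; ring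
        · show _ = ((1:ℝ) + ((m:ℝ) - 1)) / ((2*m : ℕ):ℝ); push_cast; field_simp; ring
      rw [this]
      refine phi_mem hFattr ?_ z01
      obtain ⟨k, hk⟩ := he
      exact mem_Dm_iff.2 (Or.inr (Or.inr ⟨k, by omega, Or.inl ⟨by omega, by omega⟩⟩))
    · have : p = phi (2 * m) (i, m) ((0:ℝ), (0:ℝ)) := by
        simp only [phi, hp]
        rw [Prod.ext_iff]
        constructor
        · show _ = ((0:ℝ) + (i:ℝ)) / ((2*m : ℕ):ℝ); push_cast; ring
        · show _ = ((0:ℝ) + (m:ℝ)) / ((2*m : ℕ):ℝ); push_cast; field_simp; ring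
      rw [this]
      refine phi_mem hFattr ?_ z00
      obtain ⟨k, hk⟩ := ho
      exact mem_Dm_iff.2 (Or.inr (Or.inr ⟨k, by omega, Or.inr ⟨by omega, by omega, by omega⟩⟩))
  refine ⟨hpF, ?_⟩
  -- not preconnected
  have hqp : ((0:ℝ), (0:ℝ)) ≠ p := by
    intro h
    have := congrArg Prod.snd h
    simp [hp] at this
  have hrp : ((1:ℝ), (1:ℝ)) ≠ p := by
    intro h
    have := congrArg Prod.snd h
    simp [hp] at this
  have hεpos : (0:ℝ) < 1 / (2 * m) := by positivity
  have hstripL : ∀ x ∈ F, (i:ℝ) / (2 * m) - 1 / (2 * m) < x.1 → x.1 < (i:ℝ) / (2 * m) →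
      ((i - 1) % 2 = 0 → x.2 ≤ 1 / 2) ∧ ((i - 1) % 2 = 1 → 1 / 2 ≤ x.2) := by
    intro x hxF hl hr
    refine strip hm hFne hFc hFattr hxF (j := i - 1) (by omega) (by omega) ?_ ?_
    · rw [hci1]
      rw [div_sub_div_same] at hl
      exact hl
    · rw [hci1]
      have : (i:ℝ) - 1 + 1 = (i:ℝ) := by ring
      rw [this]
      exact hr
  have hstripR : ∀ x ∈ F, (i:ℝ) / (2 * m) < x.1 → x.1 < (i:ℝ) / (2 * m) + 1 / (2 * m) →
      (i % 2 = 0 → x.2 ≤ 1 / 2) ∧ (i % 2 = 1 → 1 / 2 ≤ x.2) := by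
    intro x hxF hl hr
    refine strip hm hFne hFc hFattr hxF (j := i) (by omega) (by omega) hl ?_
    rw [← add_div] at hr
    exact hr
  rcases Nat.even_or_odd i with he | ho
  · have hi0 : i % 2 = 0 := Nat.even_iff.1 he
    refine cut_helper F ((i:ℝ) / (2 * m)) (1 / (2 * m)) hεpos p rfl id continuous_id
      (fun y hy => hy) ?_ ?_ ((0:ℝ), (0:ℝ)) ((1:ℝ), (1:ℝ)) z00 ha1 hqp z11 ha2 hrp
    · intro x hxF h1 h2
      exact (hstripL x hxF h1 h2).2 (by omega)
    · intro x hxF h1 h2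
      exact (hstripR x hxF h1 h2).1 hi0
  · have hi1 : i % 2 = 1 := Nat.odd_iff.1 ho
    refine cut_helper F ((i:ℝ) / (2 * m)) (1 / (2 * m)) hεpos p rfl (fun y => 1 - y)
      (continuous_const.sub continuous_id) (fun y hy => by show y = 1/2; linarith) ?_ ?_
      ((0:ℝ), (0:ℝ)) ((1:ℝ), (1:ℝ)) z00 ha1 hqp z11 ha2 hrp
    · intro x hxF h1 h2
      have := (hstripL x hxF h1 h2).1 (by omega)
      linarith
    · intro x hxF h1 h2
      have := (hstripR x hxF h1 h2).2 hi1
      linarith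
end

section
/- Let F be a non-fragile connected GSC and let x ∈ F be a cut point of F. Then there exists a digit i ∈ 𝒟 with x ∈ φ_i(F) such that φ_i(F) \ {x} is disconnected (equivalently, φ_i^{−1}(x) is a cut point of F). -/
open Set

/-- A connected GSC is fragile if the digit set splits into two nonempty parts
whose unions of level-1 cells meet in a single point. -/
def Fragile (N : ℕ) (D : Finset (ℕ × ℕ)) (F : Set (ℝ × ℝ)) : Prop :=
  ∃ D₁ D₂ : Finset (ℕ × ℕ), D₁ ∪ D₂ = D ∧ Disjoint D₁ D₂ ∧
    D₁.Nonempty ∧ D₂.Nonempty ∧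
    ∃ z : ℝ × ℝ, (⋃ d ∈ D₁, phi N d '' F) ∩ (⋃ d ∈ D₂, phi N d '' F) = {z}

theorem phi_continuous (N : ℕ) (d : ℕ × ℕ) : Continuous (phi N d) := by
  unfold phi
  fun_prop

/-- If F is a non-fragile connected GSC and x is a cut point of F, then there is
a digit i ∈ 𝒟 with x ∈ φ_i(F) such that φ_i(F) \ {x} is disconnected. -/
theorem stmt10 (N : ℕ) (hN : 2 ≤ N) (D : Finset (ℕ × ℕ))
    (hD : ∀ d ∈ D, d.1 < N ∧ d.2 < N) (hDcard : 1 < D.card ∧ D.card < N ^ 2)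
    (F : Set (ℝ × ℝ)) (hFne : F.Nonempty) (hFc : IsCompact F)
    (hFattr : F = ⋃ d ∈ D, phi N d '' F) (hFconn : IsConnected F)
    (hnf : ¬ Fragile N D F)
    (x : ℝ × ℝ) (hx : x ∈ F) (hcut : ¬ IsPreconnected (F \ {x})) :
    ∃ i ∈ D, x ∈ phi N i '' F ∧ ¬ IsPreconnected ((phi N i '' F) \ {x}) := by
  classical
  by_contra hcon
  push_neg at hcon
  apply hcut
  -- the pieces
  set s : ℕ × ℕ → Set (ℝ × ℝ) := fun d => (phi N d '' F) \ {x} with hs_def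
  have hcellc : ∀ d : ℕ × ℕ, IsCompact (phi N d '' F) := fun d =>
    hFc.image (phi_continuous N d)
  have hcellne : ∀ d : ℕ × ℕ, (phi N d '' F).Nonempty := fun d => hFne.image _
  have hcellsub : ∀ d ∈ D, phi N d '' F ⊆ F := by
    intro d hd y hy
    rw [hFattr]
    exact mem_biUnion hd hy
  -- each piece is preconnected
  have hs : ∀ d ∈ D, IsPreconnected (s d) := by
    intro d hd
    by_cases hxd : x ∈ phi N d '' F
    · exact hcon d hd hxd
    · have : s d = phi N d '' F := diff_singleton_eq_self hxd
      rw [this]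
      exact (hFconn.isPreconnected).image _ (phi_continuous N d).continuousOn
  -- covering
  have hcover : F \ {x} = ⋃ d ∈ D, s d := by
    have h1 : F \ {x} = (⋃ d ∈ D, phi N d '' F) \ {x} := by rw [← hFattr]
    rw [h1]
    ext y
    simp only [hs_def, mem_diff, mem_iUnion, mem_singleton_iff]
    tauto
  rw [hcover]
  -- the chain condition
  set R : ℕ × ℕ → ℕ × ℕ → Prop :=
    fun a b => (s a ∩ s b).Nonempty ∧ a ∈ (↑D : Set (ℕ × ℕ)) with hR_def
  apply IsPreconnected.biUnion_of_reflTransGen hs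
  intro i hi j hj
  by_contra hij
  apply hnf
  -- build the fragile partition
  set D₁ : Finset (ℕ × ℕ) := D.filter (fun d => Relation.ReflTransGen R i d) with hD₁
  have hD₁sub : D₁ ⊆ D := Finset.filter_subset _ _
  set D₂ : Finset (ℕ × ℕ) := D \ D₁ with hD₂
  have hiD₁ : i ∈ D₁ := by
    rw [hD₁, Finset.mem_filter]
    exact ⟨hi, Relation.ReflTransGen.refl⟩
  have hjD₂ : j ∈ D₂ := by
    rw [hD₂, Finset.mem_sdiff]
    refine ⟨hj, ?_⟩
    rw [hD₁, Finset.mem_filter]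
    rintro ⟨-, h⟩
    exact hij h
  -- key: cells from the two sides meet only at x
  have hkey : ∀ a ∈ D₁, ∀ b ∈ D₂, phi N a '' F ∩ phi N b '' F ⊆ {x} := by
    intro a ha b hb y hy
    by_contra hyx
    have hy' : y ∈ s a ∩ s b := ⟨⟨hy.1, hyx⟩, ⟨hy.2, hyx⟩⟩
    have ha' := Finset.mem_filter.mp (hD₁ ▸ ha)
    have hb' : b ∈ D₁ := by
      rw [hD₁, Finset.mem_filter]
      exact ⟨(Finset.mem_sdiff.mp (hD₂ ▸ hb)).1,
        ha'.2.tail ⟨⟨y, hy'⟩, ha'.1⟩⟩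
    exact (Finset.mem_sdiff.mp (hD₂ ▸ hb)).2 hb'
  set A : Set (ℝ × ℝ) := ⋃ d ∈ D₁, phi N d '' F with hA
  set B : Set (ℝ × ℝ) := ⋃ d ∈ D₂, phi N d '' F with hB
  have hABsub : A ∩ B ⊆ {x} := by
    rintro y ⟨hyA, hyB⟩
    obtain ⟨a, ha, hya⟩ := mem_iUnion₂.mp hyA
    obtain ⟨b, hb, hyb⟩ := mem_iUnion₂.mp hyB
    exact hkey a ha b hb ⟨hya, hyb⟩
  have hunion : D₁ ∪ D₂ = D := Finset.union_sdiff_of_subset hD₁sub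
  have hFAB : F ⊆ A ∪ B := by
    intro y hy
    rw [hFattr] at hy
    obtain ⟨d, hd, hyd⟩ := mem_iUnion₂.mp hy
    rcases Finset.mem_union.mp (hunion ▸ hd) with h | h
    · exact Or.inl (mem_biUnion h hyd)
    · exact Or.inr (mem_biUnion h hyd)
  have hAclosed : IsClosed A := by
    apply Set.Finite.isClosed_biUnion D₁.finite_toSet
    intro d _
    exact (hcellc d).isClosed
  have hBclosed : IsClosed B := by
    apply Set.Finite.isClosed_biUnion D₂.finite_toSet
    intro d _
    exact (hcellc d).isClosed
  have hABne : (A ∩ B).Nonempty := by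
    have hFA : (F ∩ A).Nonempty := by
      obtain ⟨y, hy⟩ := hcellne i
      exact ⟨y, hcellsub i hi hy, mem_biUnion hiD₁ hy⟩
    have hFB : (F ∩ B).Nonempty := by
      obtain ⟨y, hy⟩ := hcellne j
      exact ⟨y, hcellsub j hj hy, mem_biUnion hjD₂ hy⟩
    have := isPreconnected_closed_iff.mp hFconn.isPreconnected A B
      hAclosed hBclosed hFAB hFA hFB
    obtain ⟨y, -, hy⟩ := this
    exact ⟨y, hy⟩
  refine ⟨D₁, D₂, hunion, Finset.disjoint_sdiff, ⟨i, hiD₁⟩, ⟨j, hjD₂⟩, x, ?_⟩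
  rw [← hA, ← hB]
  exact (hABsub.antisymm (by
    obtain ⟨y, hy⟩ := hABne
    have := hABsub hy
    rintro z rfl
    rwa [← this]))
end
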